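/- Let G be a second countable locally compact Hausdorff principal integrable groupoid with left Haar system, let u ∈ G⁰ and f ∈ C_c(G). Then the kernel k_f(γ,α) = f(γα⁻¹) belongs to L²(G × G, λ_u × λ_u), and ‖k_f‖² ≤ ‖f‖_∞² · M · N, where M = sup{λ_x(supp f) : x ∈ s(supp f)} and N = sup{λ_x(r⁻¹(s(supp f))) : x ∈ G⁰}, both finite and independent of u. -/

import Mathlib

open MeasureTheory Filter Topology ENNReal Classical

/-- A topological groupoid, given by range/source maps, a (total) partial-multiplication
`mul` (only meaningful on composable pairs, i.e. when `s γ = r α`) and inversion. -/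
structure TopGroupoid (G : Type*) [TopologicalSpace G] where
  r : G → G
  s : G → G
  mul : G → G → G
  inv : G → G
  r_mul : ∀ γ α, s γ = r α → r (mul γ α) = r γ
  s_mul : ∀ γ α, s γ = r α → s (mul γ α) = s α
  mul_assoc' : ∀ γ α β, s γ = r α → s α = r β → mul (mul γ α) β = mul γ (mul α β)
  r_inv : ∀ γ, r (inv γ) = s γ
  s_inv : ∀ γ, s (inv γ) = r γ
  inv_inv' : ∀ γ, inv (inv γ) = γ
  mul_inv' : ∀ γ, mul γ (inv γ) = r γ
  inv_mul' : ∀ γ, mul (inv γ) γ = s γ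
  unit_mul : ∀ γ, mul (r γ) γ = γ
  mul_unit : ∀ γ, mul γ (s γ) = γ
  continuous_r : Continuous r
  continuous_s : Continuous s
  continuous_inv : Continuous inv
  continuous_mul : ContinuousOn (fun p : G × G => mul p.1 p.2) {p | s p.1 = r p.2}

namespace TopGroupoid

variable {G : Type*} [TopologicalSpace G] (Gd : TopGroupoid G)

/-- The unit space `G⁰` of the groupoid. -/
def units : Set G := Set.range Gd.r

/-- The orbit `[z] = r(s⁻¹{z})` of a unit `z`. -/
def orbit (z : G) : Set G := Gd.r '' (Gd.s ⁻¹' {z})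

/-- A groupoid is principal if `γ ↦ (r γ, s γ)` is injective. -/
def Principal : Prop := Function.Injective (fun γ => (Gd.r γ, Gd.s γ))

/-- Product of two subsets of the groupoid: all products of composable pairs. -/
def setMul (A B : Set G) : Set G :=
  {x | ∃ γ ∈ A, ∃ α ∈ B, Gd.s γ = Gd.r α ∧ x = Gd.mul γ α}

/-- Powers of a subset with respect to `setMul`; `A ^ 1 = A`. -/
def setPow (A : Set G) : ℕ → Set G
  | 0 => Gd.units
  | n+1 => Gd.setMul A (setPow A n)

/-- A set `W ⊆ G` is conditionally compact if `WV` and `VW` are relatively compact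
for every compact `V ⊆ G`. -/
def CondCompact (W : Set G) : Prop :=
  ∀ V : Set G, IsCompact V →
    IsCompact (closure (Gd.setMul W V)) ∧ IsCompact (closure (Gd.setMul V W))

/-- A sequence `x : ℕ → G` (in the unit space) converges `k`-times in `G⁰/G` to `z`. -/
def ConvergesKTimes (x : ℕ → G) (z : G) (k : ℕ) : Prop :=
  ∃ γ : Fin k → ℕ → G,
    (∀ i n, Gd.s (γ i n) = x n) ∧
    (∀ i, Tendsto (fun n => Gd.r (γ i n)) atTop (𝓝 z)) ∧
    (∀ i j : Fin k, i < j →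
      Tendsto (fun n => Gd.mul (γ j n) (Gd.inv (γ i n))) atTop (cocompact G))

end TopGroupoid

/-- A left Haar system on a topological groupoid: a family of Radon measures `λˣ`
with support `r⁻¹{x}`, continuous in `x`, and left invariant. -/
structure HaarSystem {G : Type*} [TopologicalSpace G] [MeasurableSpace G]
    (Gd : TopGroupoid G) where
  lam : G → Measure G
  regular : ∀ x, (lam x).Regular
  supp_subset : ∀ x ∈ Gd.units, lam x {γ | Gd.r γ ≠ x} = 0
  supp_full : ∀ x ∈ Gd.units, ∀ U : Set G, IsOpen U →
      (U ∩ Gd.r ⁻¹' {x}).Nonempty → 0 < lam x U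
  continuous_int : ∀ f : G → ℝ, Continuous f → HasCompactSupport f →
      Continuous fun x => ∫ γ, f γ ∂(lam x)
  left_invariant : ∀ γ : G, ∀ f : G → ℝ, Continuous f → HasCompactSupport f →
      ∫ α, f (Gd.mul γ α) ∂(lam (Gd.s γ)) = ∫ α, f α ∂(lam (Gd.r γ))

namespace HaarSystem

variable {G : Type*} [TopologicalSpace G] [MeasurableSpace G]
  {Gd : TopGroupoid G} (HS : HaarSystem Gd)

/-- The associated right Haar system `λ_x(E) = λˣ(E⁻¹)`, supported on `s⁻¹{x}`. -/
noncomputable def rlam (x : G) : Measure G := (HS.lam x).map Gd.inv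

/-- The groupoid (with its Haar system) is integrable if
`sup_{x ∈ N} λˣ(s⁻¹ N) < ∞` for every compact `N ⊆ G⁰`. -/
def Integrable : Prop :=
  ∀ N : Set G, N ⊆ Gd.units → IsCompact N →
    (⨆ x ∈ N, HS.lam x (Gd.s ⁻¹' N)) < ⊤

/-- `G` fails to be integrable at `z` if `sup_{x ∈ U} λˣ(s⁻¹ U) = ∞` for every open
neighborhood `U` of `z` in `G⁰`. -/
def FailsIntegrableAt (z : G) : Prop :=
  ∀ U : Set G, IsOpen U → z ∈ U →
    (⨆ x ∈ U ∩ Gd.units, HS.lam x (Gd.s ⁻¹' (U ∩ Gd.units))) = ⊤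

end HaarSystem

/-! Left invariance of the Haar system, tested against Urysohn functions, shows that left
translation by `γ` carries compact subsets of the fibre of `λ^{s γ}` to sets of no smaller
`λ^{r γ}`-measure; inverting, right translation does the same for the right Haar system.
For fixed `α`, the function `γ ↦ k_f(γ, α)` is bounded by `‖f‖∞` and supported in
`(supp f ∩ s⁻¹{r α}) α`, whose `λ_{s α}`-measure is therefore at most
`λ_{r α}(supp f) ≤ M`; it vanishes unless `r α ∈ s(supp f)`. Tonelli then gives
`‖k_f‖² ≤ ‖f‖∞² M λ_u(r⁻¹(s(supp f))) ≤ ‖f‖∞² M N`.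
`M` and `N` are finite by integrability at the compact set `s(supp f) ∪ r(supp f)` of units:
for `N` one uses that `λˣ(s⁻¹ S)` does not exceed `λ^y(s⁻¹ S)` for some `y ∈ S`, because
a fibre `r⁻¹{x}` meeting `s⁻¹ S` is translated into the fibre over such a `y`. -/

lemma Continuous.iSup_nnnorm_lt_top_of_hasCompactSupport {X : Type*} [TopologicalSpace X]
    {f : X → ℝ} (hf : Continuous f) (hfc : HasCompactSupport f) :
    (⨆ x, (‖f x‖₊ : ℝ≥0∞)) < ⊤ := by
  obtain ⟨C, hC⟩ := hf.bounded_above_of_compact_support hfc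
  refine lt_of_le_of_lt (iSup_le fun x => ?_) (ENNReal.ofReal_lt_top (r := C))
  rw [← ENNReal.ofReal_coe_nnreal, coe_nnnorm]
  exact ENNReal.ofReal_le_ofReal (hC x)

lemma memLp_two_of_lintegral_sq_lt_top {X : Type*} [MeasurableSpace X] {μ : Measure X}
    {f : X → ℝ} (hf : Measurable f) (hfin : ∫⁻ x, (‖f x‖₊ : ℝ≥0∞) ^ 2 ∂μ < ⊤) :
    MemLp f 2 μ := by
  refine (memLp_two_iff_integrable_sq hf.aestronglyMeasurable).2
    ⟨(hf.pow_const 2).aestronglyMeasurable, ?_⟩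
  simpa only [HasFiniteIntegral, enorm_eq_nnnorm, nnnorm_pow, coe_pow] using hfin

namespace TopGroupoid

variable {G : Type*} [TopologicalSpace G] (Gd : TopGroupoid G)

lemma r_mem_units (γ : G) : Gd.r γ ∈ Gd.units := ⟨γ, rfl⟩

lemma s_mem_units (γ : G) : Gd.s γ ∈ Gd.units := ⟨Gd.inv γ, Gd.r_inv γ⟩

lemma inv_mul_cancel_left {γ δ : G} (h : Gd.s γ = Gd.r δ) :
    Gd.mul (Gd.inv γ) (Gd.mul γ δ) = δ := by
  rw [← Gd.mul_assoc' _ _ _ (Gd.s_inv γ) h, Gd.inv_mul', h, Gd.unit_mul]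

lemma mul_inv_cancel_right {γ δ : G} (h : Gd.s γ = Gd.r δ) :
    Gd.mul (Gd.mul γ δ) (Gd.inv δ) = γ := by
  rw [Gd.mul_assoc' _ _ _ h (Gd.r_inv δ).symm, Gd.mul_inv', ← h, Gd.mul_unit]

lemma inv_mul_cancel_right {γ δ : G} (h : Gd.s γ = Gd.s δ) :
    Gd.mul (Gd.mul γ (Gd.inv δ)) δ = γ := by
  rw [Gd.mul_assoc' _ _ _ (h.trans (Gd.r_inv δ).symm) (Gd.s_inv δ), Gd.inv_mul', ← h,
    Gd.mul_unit]

lemma mul_inv_rev {γ δ : G} (h : Gd.s γ = Gd.r δ) :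
    Gd.inv (Gd.mul γ δ) = Gd.mul (Gd.inv δ) (Gd.inv γ) := by
  set x := Gd.mul γ δ
  set y := Gd.mul (Gd.inv δ) (Gd.inv γ)
  have hxy : Gd.mul x y = Gd.r x := by
    rw [← Gd.mul_assoc' _ _ _ ((Gd.s_mul _ _ h).trans (Gd.r_inv δ).symm)
        ((Gd.s_inv δ).trans (h.symm.trans (Gd.r_inv γ).symm)),
      Gd.mul_inv_cancel_right h, Gd.mul_inv', Gd.r_mul _ _ h]
  have hy : Gd.r y = Gd.s x := by
    rw [Gd.r_mul _ _ ((Gd.s_inv δ).trans (h.symm.trans (Gd.r_inv γ).symm)), Gd.r_inv,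
      Gd.s_mul _ _ h]
  -- a right inverse of `x` with the right range is its inverse
  calc Gd.inv x = Gd.mul (Gd.inv x) (Gd.mul x y) := by rw [hxy, ← Gd.s_inv x, Gd.mul_unit]
    _ = y := by
      rw [← Gd.mul_assoc' _ _ _ (Gd.s_inv x) hy.symm, Gd.inv_mul', ← hy, Gd.unit_mul]

lemma continuousOn_mul_left (γ : G) : ContinuousOn (Gd.mul γ) {δ | Gd.s γ = Gd.r δ} :=
  Gd.continuous_mul.comp (continuous_const.prodMk continuous_id).continuousOn fun _ h => h

lemma continuousOn_mul_right (δ : G) :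
    ContinuousOn (fun γ => Gd.mul γ δ) {γ | Gd.s γ = Gd.r δ} :=
  Gd.continuous_mul.comp (continuous_id.prodMk continuous_const).continuousOn fun _ h => h

def invHomeomorph : G ≃ₜ G where
  toFun := Gd.inv
  invFun := Gd.inv
  left_inv := Gd.inv_inv'
  right_inv := Gd.inv_inv'
  continuous_toFun := Gd.continuous_inv
  continuous_invFun := Gd.continuous_inv

noncomputable def kernel (f : G → ℝ) (p : G × G) : ℝ :=
  if Gd.s p.1 = Gd.s p.2 then f (Gd.mul p.1 (Gd.inv p.2)) else 0

lemma measurable_kernel [T2Space G] [MeasurableSpace G] [OpensMeasurableSpace (G × G)]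
    {f : G → ℝ} (hf : Continuous f) : Measurable (Gd.kernel f) := by
  have hC : IsClosed {p : G × G | Gd.s p.1 = Gd.s p.2} :=
    isClosed_eq (Gd.continuous_s.comp continuous_fst) (Gd.continuous_s.comp continuous_snd)
  refine ContinuousOn.measurable_piecewise (hf.comp_continuousOn ?_) continuousOn_const
    hC.measurableSet
  exact Gd.continuous_mul.comp
    (continuous_fst.prodMk (Gd.continuous_inv.comp continuous_snd)).continuousOn
    fun p hp => hp.trans (Gd.r_inv p.2).symm

lemma sq_nnnorm_kernel_le (f : G → ℝ) (γ α : G) :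
    (‖Gd.kernel f (γ, α)‖₊ : ℝ≥0∞) ^ 2 ≤
      (⨆ ε, (‖f ε‖₊ : ℝ≥0∞)) ^ 2 *
        ((fun δ => Gd.mul δ α) '' (tsupport f ∩ {δ | Gd.s δ = Gd.r α})).indicator 1 γ := by
  dsimp only [kernel]
  split_ifs with hs
  · by_cases hK : Gd.mul γ (Gd.inv α) ∈ tsupport f
    · have hsK : Gd.s (Gd.mul γ (Gd.inv α)) = Gd.r α := by
        rw [Gd.s_mul _ _ (hs.trans (Gd.r_inv α).symm), Gd.s_inv]
      rw [Set.indicator_of_mem, Pi.one_apply, mul_one]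
      · exact pow_le_pow_left' (le_iSup (fun ε => (‖f ε‖₊ : ℝ≥0∞)) _) 2
      · exact ⟨_, ⟨hK, hsK⟩, Gd.inv_mul_cancel_right hs⟩
    · simp [image_eq_zero_of_notMem_tsupport hK]
  · simp

end TopGroupoid

namespace HaarSystem

variable {G : Type*} [TopologicalSpace G] [MeasurableSpace G] {Gd : TopGroupoid G}
  (HS : HaarSystem Gd)

lemma lam_inter_setOf_r_eq {x : G} (hx : x ∈ Gd.units) (E : Set G) :
    HS.lam x (E ∩ {γ | Gd.r γ = x}) = HS.lam x E :=
  measure_inter_conull (HS.supp_subset x hx)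

lemma ae_r_eq {x : G} (hx : x ∈ Gd.units) : ∀ᵐ γ ∂HS.lam x, Gd.r γ = x :=
  HS.supp_subset x hx

lemma Integrable.iSup_lam_preimage_s_lt_top {HS : HaarSystem Gd} (hint : HS.Integrable)
    {N A B : Set G} (hN : N ⊆ Gd.units) (hNc : IsCompact N) (hA : A ⊆ N) (hB : B ⊆ N) :
    ⨆ x ∈ A, HS.lam x (Gd.s ⁻¹' B) < ⊤ := by
  refine lt_of_le_of_lt (iSup₂_le fun x hx => ?_) (hint N hN hNc)
  exact (measure_mono (Set.preimage_mono hB)).trans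
    (le_biSup (fun x => HS.lam x (Gd.s ⁻¹' N)) (hA hx))

variable [BorelSpace G]

lemma rlam_apply (x : G) (E : Set G) : HS.rlam x E = HS.lam x (Gd.inv ⁻¹' E) :=
  Gd.invHomeomorph.toMeasurableEquiv.map_apply E

lemma rlam_preimage_r (x : G) (S : Set G) :
    HS.rlam x (Gd.r ⁻¹' S) = HS.lam x (Gd.s ⁻¹' S) := by
  simp only [rlam_apply, Set.preimage_preimage, Gd.r_inv]

lemma rlam_le_lam_preimage_s_image_r (x : G) (K : Set G) :
    HS.rlam x K ≤ HS.lam x (Gd.s ⁻¹' (Gd.r '' K)) := by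
  rw [rlam_apply]
  exact measure_mono fun γ hγ => ⟨Gd.inv γ, hγ, Gd.r_inv γ⟩

lemma ae_s_eq_rlam {x : G} (hx : x ∈ Gd.units) : ∀ᵐ γ ∂HS.rlam x, Gd.s γ = x := by
  rw [ae_iff, rlam_apply]
  simpa only [Set.preimage_ofPred_eq, Gd.s_inv] using HS.supp_subset x hx

variable [T2Space G]

lemma integrable_comp_mul_left (γ : G) {g : G → ℝ} (hg : Continuous g)
    (hgc : HasCompactSupport g) :
    MeasureTheory.Integrable (fun δ => g (Gd.mul γ δ)) (HS.lam (Gd.s γ)) := by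
  have := HS.regular (Gd.s γ)
  set F := {δ | Gd.s γ = Gd.r δ}
  have hF : IsClosed F := isClosed_eq continuous_const Gd.continuous_r
  -- `λ^{s γ}` lives on `F`, where the integrand is continuous and vanishes off the compact `Q`.
  set Q := Gd.mul (Gd.inv γ) '' (tsupport g ∩ {ε | Gd.s (Gd.inv γ) = Gd.r ε})
  have hQ : IsCompact Q := (hgc.inter_right (isClosed_eq continuous_const Gd.continuous_r))
    |>.image_of_continuousOn ((Gd.continuousOn_mul_left _).mono fun _ hε => hε.2)
  have hQF : Q ⊆ F := by
    rintro _ ⟨ε, ⟨-, hε⟩, rfl⟩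
    exact ((Gd.r_mul _ _ hε).trans (Gd.r_inv γ)).symm
  have hvanish : ∀ δ ∈ F \ Q, g (Gd.mul γ δ) = 0 := fun δ hδ =>
    image_eq_zero_of_notMem_tsupport fun hK => hδ.2
      ⟨_, ⟨hK, (Gd.s_inv γ).trans (Gd.r_mul _ _ hδ.1).symm⟩, Gd.inv_mul_cancel_left hδ.1⟩
  have hF_ae : ∀ᵐ δ ∂HS.lam (Gd.s γ), δ ∈ F :=
    (HS.ae_r_eq (Gd.s_mem_units γ)).mono fun δ h => h.symm
  rw [← Measure.restrict_eq_self_of_ae_mem hF_ae]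
  exact ((hg.comp_continuousOn (Gd.continuousOn_mul_left γ)).mono hQF
    |>.integrableOn_compact hQ).of_forall_sdiff_eq_zero hF.measurableSet hvanish

variable [LocallyCompactSpace G]

lemma lam_le_lam_image_mul_left (γ : G) {C : Set G} (hC : IsCompact C)
    (hCr : ∀ δ ∈ C, Gd.s γ = Gd.r δ) :
    HS.lam (Gd.s γ) C ≤ HS.lam (Gd.r γ) (Gd.mul γ '' C) := by
  have := HS.regular (Gd.r γ)
  have hD : IsCompact (Gd.mul γ '' C) :=
    hC.image_of_continuousOn ((Gd.continuousOn_mul_left γ).mono hCr)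
  rw [Set.measure_eq_iInf_isOpen (Gd.mul γ '' C)]
  refine le_iInf₂ fun U hDU => le_iInf fun hU => ?_
  obtain ⟨g, hg1, hg0, hgc, hg01⟩ :=
    exists_continuous_one_zero_of_isCompact hD hU.isClosed_compl hDU.disjoint_compl_right
  have hint := HS.integrable_comp_mul_left γ g.continuous hgc
  calc HS.lam (Gd.s γ) C ≤ ∫⁻ δ, ENNReal.ofReal (g (Gd.mul γ δ)) ∂HS.lam (Gd.s γ) :=
        meas_le_lintegral₀ hint.aemeasurable.ennreal_ofReal fun δ hδ => by
          simp [hg1 (Set.mem_image_of_mem _ hδ)]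
    _ = ENNReal.ofReal (∫ δ, g (Gd.mul γ δ) ∂HS.lam (Gd.s γ)) :=
        (ofReal_integral_eq_lintegral_ofReal hint (ae_of_all _ fun δ => (hg01 _).1)).symm
    _ = ENNReal.ofReal (∫ ε, g ε ∂HS.lam (Gd.r γ)) := by
        rw [HS.left_invariant γ g g.continuous hgc]
    _ = ∫⁻ ε, ENNReal.ofReal (g ε) ∂HS.lam (Gd.r γ) :=
        ofReal_integral_eq_lintegral_ofReal (g.continuous.integrable_of_hasCompactSupport hgc)
          (ae_of_all _ fun ε => (hg01 ε).1)
    _ ≤ HS.lam (Gd.r γ) U :=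
        lintegral_le_meas (fun ε => ENNReal.ofReal_le_one.2 (hg01 ε).2) fun ε hε => by
          simp [hg0 hε]

lemma rlam_le_rlam_image_mul_right (β : G) {C : Set G} (hC : IsCompact C)
    (hCs : ∀ δ ∈ C, Gd.s δ = Gd.r β) :
    HS.rlam (Gd.r β) C ≤ HS.rlam (Gd.s β) ((fun δ => Gd.mul δ β) '' C) := by
  have hC' : ∀ δ ∈ Gd.inv ⁻¹' C, Gd.s (Gd.inv β) = Gd.r δ := fun δ hδ => by
    rw [Gd.s_inv, ← hCs _ hδ, Gd.s_inv]
  have key := HS.lam_le_lam_image_mul_left (Gd.inv β)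
    (Gd.invHomeomorph.isCompact_preimage.2 hC) hC'
  rw [Gd.s_inv, Gd.r_inv] at key
  rw [rlam_apply, rlam_apply]
  refine key.trans (measure_mono ?_)
  rintro _ ⟨δ, hδ, rfl⟩
  exact ⟨Gd.inv δ, hδ, by rw [Gd.mul_inv_rev (hC' δ hδ), Gd.inv_inv']⟩

lemma lintegral_sq_kernel_left_le (f : G → ℝ) (hf : HasCompactSupport f) (α : G) :
    ∫⁻ γ, (‖Gd.kernel f (γ, α)‖₊ : ℝ≥0∞) ^ 2 ∂HS.rlam (Gd.s α) ≤
      (⨆ ε, (‖f ε‖₊ : ℝ≥0∞)) ^ 2 *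
        (⨆ x ∈ Gd.s '' tsupport f, HS.rlam x (tsupport f)) *
        (Gd.r ⁻¹' (Gd.s '' tsupport f)).indicator 1 α := by
  set W := (fun δ => Gd.mul δ α) '' (tsupport f ∩ {δ | Gd.s δ = Gd.r α})
  have hW : IsCompact W := (hf.inter_right (isClosed_eq Gd.continuous_s continuous_const))
    |>.image_of_continuousOn ((Gd.continuousOn_mul_right α).mono fun _ hδ => hδ.2)
  calc ∫⁻ γ, (‖Gd.kernel f (γ, α)‖₊ : ℝ≥0∞) ^ 2 ∂HS.rlam (Gd.s α)
      ≤ ∫⁻ γ, (⨆ ε, (‖f ε‖₊ : ℝ≥0∞)) ^ 2 * W.indicator 1 γ ∂HS.rlam (Gd.s α) :=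
        lintegral_mono fun γ => Gd.sq_nnnorm_kernel_le f γ α
    _ = (⨆ ε, (‖f ε‖₊ : ℝ≥0∞)) ^ 2 * HS.rlam (Gd.s α) W := by
        rw [lintegral_const_mul _ (measurable_one.indicator hW.isClosed.measurableSet),
          lintegral_indicator_one hW.isClosed.measurableSet]
    _ ≤ _ := by
      rw [mul_assoc]
      gcongr
      by_cases hα : Gd.r α ∈ Gd.s '' tsupport f
      · rw [Set.indicator_of_mem (Set.mem_preimage.2 hα), Pi.one_apply, mul_one]
        calc HS.rlam (Gd.s α) W = HS.rlam (Gd.r (Gd.inv α)) W := by rw [Gd.r_inv]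
          _ ≤ HS.rlam (Gd.s (Gd.inv α)) ((fun δ => Gd.mul δ (Gd.inv α)) '' W) :=
              HS.rlam_le_rlam_image_mul_right (Gd.inv α) hW <| by
                rintro _ ⟨δ, ⟨-, hδ⟩, rfl⟩
                rw [Gd.r_inv, Gd.s_mul _ _ hδ]
          _ ≤ HS.rlam (Gd.r α) (tsupport f) := by
              rw [Gd.s_inv]
              refine measure_mono ?_
              rintro _ ⟨_, ⟨δ, ⟨hδK, hδ⟩, rfl⟩, rfl⟩
              dsimp only
              rwa [Gd.mul_inv_cancel_right hδ]
          _ ≤ _ := le_biSup (fun x => HS.rlam x (tsupport f)) hα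
      · have hW0 : W = ∅ := by
          refine Set.image_eq_empty.2 (Set.eq_empty_of_forall_notMem ?_)
          rintro δ ⟨hδK, hδ⟩
          exact hα ⟨δ, hδK, hδ⟩
        simp [hW0]

variable [SecondCountableTopology G]

instance sFinite_rlam (x : G) : SFinite (HS.rlam x) := by
  have := HS.regular x
  unfold rlam
  infer_instance

lemma lam_s_preimage_s_le_lam_r (γ : G) {S : Set G} (hS : MeasurableSet S) :
    HS.lam (Gd.s γ) (Gd.s ⁻¹' S) ≤ HS.lam (Gd.r γ) (Gd.s ⁻¹' S) := by
  have := HS.regular (Gd.s γ)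
  rw [(hS.preimage Gd.continuous_s.measurable).measure_eq_iSup_isCompact]
  refine iSup₂_le fun C hCS => iSup_le fun hC => ?_
  rw [← HS.lam_inter_setOf_r_eq (Gd.s_mem_units γ)]
  have hC' : IsCompact (C ∩ {δ | Gd.r δ = Gd.s γ}) :=
    hC.inter_right (isClosed_eq Gd.continuous_r continuous_const)
  refine (HS.lam_le_lam_image_mul_left γ hC' fun δ hδ => hδ.2.symm).trans (measure_mono ?_)
  rintro _ ⟨δ, ⟨hδC, hδr⟩, rfl⟩
  show Gd.s (Gd.mul γ δ) ∈ S
  rw [Gd.s_mul _ _ hδr.symm]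
  exact hCS hδC

lemma iSup_units_lam_preimage_s_le {S : Set G} (hS : MeasurableSet S) :
    ⨆ x ∈ Gd.units, HS.lam x (Gd.s ⁻¹' S) ≤ ⨆ y ∈ S, HS.lam y (Gd.s ⁻¹' S) := by
  refine iSup₂_le fun x hx => ?_
  rcases (Gd.s ⁻¹' S ∩ {γ | Gd.r γ = x}).eq_empty_or_nonempty with h | ⟨γ, hγS, rfl⟩
  · rw [← HS.lam_inter_setOf_r_eq hx, h, measure_empty]
    exact zero_le
  · calc HS.lam (Gd.r γ) (Gd.s ⁻¹' S) = HS.lam (Gd.s (Gd.inv γ)) (Gd.s ⁻¹' S) := by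
          rw [Gd.s_inv]
      _ ≤ HS.lam (Gd.r (Gd.inv γ)) (Gd.s ⁻¹' S) :=
          HS.lam_s_preimage_s_le_lam_r (Gd.inv γ) hS
      _ = HS.lam (Gd.s γ) (Gd.s ⁻¹' S) := by rw [Gd.r_inv]
      _ ≤ ⨆ y ∈ S, HS.lam y (Gd.s ⁻¹' S) :=
          le_biSup (fun y => HS.lam y (Gd.s ⁻¹' S)) hγS

lemma lintegral_prod_sq_kernel_le {u : G} (hu : u ∈ Gd.units) {f : G → ℝ}
    (hf_cont : Continuous f) (hf : HasCompactSupport f) :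
    ∫⁻ p, (‖Gd.kernel f p‖₊ : ℝ≥0∞) ^ 2 ∂(HS.rlam u).prod (HS.rlam u) ≤
      (⨆ ε, (‖f ε‖₊ : ℝ≥0∞)) ^ 2 *
        (⨆ x ∈ Gd.s '' tsupport f, HS.rlam x (tsupport f)) *
        HS.rlam u (Gd.r ⁻¹' (Gd.s '' tsupport f)) := by
  have hrS : MeasurableSet (Gd.r ⁻¹' (Gd.s '' tsupport f)) :=
    ((hf.image Gd.continuous_s).isClosed.preimage Gd.continuous_r).measurableSet
  rw [lintegral_prod_symm _
    ((Gd.measurable_kernel hf_cont).nnnorm.coe_nnreal_ennreal.pow_const 2).aemeasurable]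
  calc _ ≤ ∫⁻ α, (⨆ ε, (‖f ε‖₊ : ℝ≥0∞)) ^ 2 *
        (⨆ x ∈ Gd.s '' tsupport f, HS.rlam x (tsupport f)) *
          (Gd.r ⁻¹' (Gd.s '' tsupport f)).indicator 1 α ∂HS.rlam u :=
        lintegral_mono_ae <| (HS.ae_s_eq_rlam hu).mono fun α hα => by
          rw [← hα]
          exact HS.lintegral_sq_kernel_left_le f hf α
    _ = _ := by rw [lintegral_const_mul _ (measurable_one.indicator hrS),
          lintegral_indicator_one hrS]

end HaarSystem

theorem stmt15_general {G : Type*} [TopologicalSpace G] [T2Space G] [LocallyCompactSpace G]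
    [SecondCountableTopology G] [MeasurableSpace G] [BorelSpace G]
    (Gd : TopGroupoid G) (HS : HaarSystem Gd)
    (hint : HS.Integrable)
    (u : G) (hu : u ∈ Gd.units)
    (f : G → ℝ) (hf_cont : Continuous f) (hf_supp : HasCompactSupport f)
    (k : G × G → ℝ)
    (hk : ∀ p : G × G,
      k p = if Gd.s p.1 = Gd.s p.2 then f (Gd.mul p.1 (Gd.inv p.2)) else 0) :
    (⨆ x ∈ Gd.s '' tsupport f, HS.rlam x (tsupport f)) < ⊤ ∧
    (⨆ x ∈ Gd.units, HS.rlam x (Gd.r ⁻¹' (Gd.s '' tsupport f))) < ⊤ ∧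
    MemLp k 2 ((HS.rlam u).prod (HS.rlam u)) ∧
    (∫⁻ p, (‖k p‖₊ : ℝ≥0∞) ^ 2 ∂((HS.rlam u).prod (HS.rlam u)))
      ≤ (⨆ γ : G, (‖f γ‖₊ : ℝ≥0∞)) ^ 2
        * (⨆ x ∈ Gd.s '' tsupport f, HS.rlam x (tsupport f))
        * (⨆ x ∈ Gd.units, HS.rlam x (Gd.r ⁻¹' (Gd.s '' tsupport f))) := by
  obtain rfl : k = Gd.kernel f := funext hk
  set K := tsupport f
  have hS : IsCompact (Gd.s '' K) := hf_supp.image Gd.continuous_s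
  have hN : Gd.s '' K ∪ Gd.r '' K ⊆ Gd.units := Set.union_subset
    (Set.image_subset_iff.2 fun γ _ => Gd.s_mem_units γ)
    (Set.image_subset_iff.2 fun γ _ => Gd.r_mem_units γ)
  have hNc : IsCompact (Gd.s '' K ∪ Gd.r '' K) := hS.union (hf_supp.image Gd.continuous_r)
  have hM : (⨆ x ∈ Gd.s '' K, HS.rlam x K) < ⊤ :=
    (iSup₂_mono fun x _ => HS.rlam_le_lam_preimage_s_image_r x K).trans_lt
      (hint.iSup_lam_preimage_s_lt_top hN hNc Set.subset_union_left Set.subset_union_right)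
  have hNfin : (⨆ x ∈ Gd.units, HS.rlam x (Gd.r ⁻¹' (Gd.s '' K))) < ⊤ := by
    simp only [HS.rlam_preimage_r]
    exact (HS.iSup_units_lam_preimage_s_le hS.isClosed.measurableSet).trans_lt
      (hint.iSup_lam_preimage_s_lt_top hN hNc Set.subset_union_left Set.subset_union_left)
  have hbound := (HS.lintegral_prod_sq_kernel_le hu hf_cont hf_supp).trans
    (mul_le_mul_right (le_biSup (fun x => HS.rlam x (Gd.r ⁻¹' (Gd.s '' K))) hu) _)
  refine ⟨hM, hNfin, memLp_two_of_lintegral_sq_lt_top (Gd.measurable_kernel hf_cont) ?_, hbound⟩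
  exact hbound.trans_lt (mul_lt_top (mul_lt_top
    (pow_lt_top (hf_cont.iSup_nnnorm_lt_top_of_hasCompactSupport hf_supp)) hM) hNfin)

/-- for `u ∈ G⁰` and `f ∈ C_c(G)`, the kernel `k_f(γ,α) = f(γα⁻¹)`
(defined to be `0` on non-composable pairs) lies in `L²(G × G, λ_u × λ_u)`, with
`‖k_f‖² ≤ ‖f‖∞² · M · N` where `M = sup{λ_x(supp f) : x ∈ s(supp f)}` and
`N = sup{λ_x(r⁻¹(s(supp f))) : x ∈ G⁰}` are finite and independent of `u`. -/
theorem stmt15 {G : Type*} [TopologicalSpace G] [T2Space G] [LocallyCompactSpace G]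
    [SecondCountableTopology G] [MeasurableSpace G] [BorelSpace G]
    (Gd : TopGroupoid G) (HS : HaarSystem Gd) (hpr : Gd.Principal)
    (hint : HS.Integrable)
    (u : G) (hu : u ∈ Gd.units)
    (f : G → ℝ) (hf_cont : Continuous f) (hf_supp : HasCompactSupport f)
    (k : G × G → ℝ)
    (hk : ∀ p : G × G,
      k p = if Gd.s p.1 = Gd.s p.2 then f (Gd.mul p.1 (Gd.inv p.2)) else 0) :
    (⨆ x ∈ Gd.s '' tsupport f, HS.rlam x (tsupport f)) < ⊤ ∧
    (⨆ x ∈ Gd.units, HS.rlam x (Gd.r ⁻¹' (Gd.s '' tsupport f))) < ⊤ ∧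
    MemLp k 2 ((HS.rlam u).prod (HS.rlam u)) ∧
    (∫⁻ p, (‖k p‖₊ : ℝ≥0∞) ^ 2 ∂((HS.rlam u).prod (HS.rlam u)))
      ≤ (⨆ γ : G, (‖f γ‖₊ : ℝ≥0∞)) ^ 2
        * (⨆ x ∈ Gd.s '' tsupport f, HS.rlam x (tsupport f))
        * (⨆ x ∈ Gd.units, HS.rlam x (Gd.r ⁻¹' (Gd.s '' tsupport f))) :=
  stmt15_general Gd HS hint u hu f hf_cont hf_supp k hk
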